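/- Let d^1, ..., d^r be degree sequences and let A_i = Δ(d^i) for each i. Then the r-fold tensor product of the pure diagrams satisfies ∏_{i=1}^r ⟨d^i⟩ = ∑_{σ ∈ Sh(A_1,...,A_r)} ⟨Σ(σ, d^1_0 + d^2_0 + ··· + d^r_0)⟩, the sum over all interleavings σ of the sequences A_1, ..., A_r. -/

import Mathlib

open scoped BigOperators

/-- A diagram is a finitely supported function `ℕ × ℤ → ℚ`.  The tensor product
of diagrams is the convolution multiplication of `AddMonoidAlgebra`:
`(β·β')_{i,j} = ∑_{i₁+i₂=i, j₁+j₂=j} β_{i₁,j₁}·β'_{i₂,j₂}`; this operation is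
associative, so finite products of diagrams are well defined. -/
abbrev Diagram : Type := AddMonoidAlgebra ℚ (ℕ × ℤ)

/-- The pure diagram `⟨d⟩` associated to a degree sequence `d = (d₀,…,d_n)`
(recorded as a list of integers): `⟨d⟩_{i,d_i} = ∏_{k ≠ i} 1/|d_i − d_k|`
for `0 ≤ i ≤ n`, and all other entries `0`. -/
noncomputable def pureDiagram (d : List ℤ) : Diagram :=
  ∑ i ∈ Finset.range d.length,
    AddMonoidAlgebra.single (i, d.getD i 0)
      (∏ k ∈ (Finset.range d.length).erase i, |(d.getD i 0 : ℚ) - (d.getD k 0 : ℚ)|⁻¹)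

/-- The first difference `Δ(d) = (d₁−d₀, d₂−d₁, …, d_n−d_{n−1})` of a degree
sequence `d = (d₀,…,d_n)`. -/
def delta (d : List ℤ) : List ℤ := List.zipWith (fun a b => b - a) d d.tail

/-- `Σ(σ,e) = (e, e+σ₁, e+σ₁+σ₂, …, e+σ₁+···+σ_r)` for a finite sequence
`σ = (σ₁,…,σ_r)` and an integer `e`. -/
def sigmaSeq (σ : List ℤ) (e : ℤ) : List ℤ := σ.scanl (· + ·) e

/-- `shuffles A B` enumerates the shuffles (interleavings) of `A` and `B`. -/
def shuffles {α : Type*} : List α → List α → List (List α)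
  | [], l₂ => [l₂]
  | a :: l₁, [] => [a :: l₁]
  | a :: l₁, b :: l₂ =>
      (shuffles l₁ (b :: l₂)).map (a :: ·) ++ (shuffles (a :: l₁) l₂).map (b :: ·)
termination_by l₁ l₂ => l₁.length + l₂.length

/-- `shufflesN [A₁, …, A_r]` enumerates the interleavings of `A₁, …, A_r`. -/
def shufflesN {α : Type*} : List (List α) → List (List α)
  | [] => [[]]
  | l :: ls => (shufflesN ls).flatMap (fun s => shuffles l s)

-- basic scanl lemmas
lemma scanl_getD (σ : List ℤ) (e : ℤ) : ∀ i, i ≤ σ.length →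
    (σ.scanl (· + ·) e).getD i 0 = e + (σ.take i).sum := by
  induction σ generalizing e with
  | nil =>
    intro i hi
    have : i = 0 := by simpa using hi
    simp [this]
  | cons x σ ih =>
    intro i hi
    cases i with
    | zero => simp
    | succ i =>
      rw [List.scanl_cons]
      simpa [add_assoc] using ih (e + x) i (by simpa using hi)

lemma sigmaSeq_delta (rest : List ℤ) : ∀ x : ℤ, sigmaSeq (delta (x :: rest)) x = x :: rest := by
  induction rest with
  | nil => intro x; simp [sigmaSeq, delta]
  | cons y t ih =>
    intro x
    have : delta (x :: y :: t) = (y - x) :: delta (y :: t) := by simp [delta]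
    rw [this]
    simp only [sigmaSeq, List.scanl_cons]
    have := ih y
    simp only [sigmaSeq] at this
    simp [this]

lemma delta_pos (d : List ℤ) (hd : d.Chain' (· < ·)) : ∀ x ∈ delta d, 0 < x := by
  induction d with
  | nil => simp [delta]
  | cons a d ih =>
    cases d with
    | nil => simp [delta]
    | cons b t =>
      intro x hx
      have h1 : a < b := (List.isChain_cons_cons.mp hd).1
      have h2 := ih (List.isChain_cons_cons.mp hd).2
      have : delta (a :: b :: t) = (b - a) :: delta (b :: t) := by simp [delta]
      rw [this] at hx
      rcases List.mem_cons.mp hx with h | h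
      · omega
      · exact h2 x h

lemma chain'_sigmaSeq (σ : List ℤ) (hσ : ∀ x ∈ σ, 0 < x) (e : ℤ) :
    (sigmaSeq σ e).Chain' (· < ·) := by
  induction σ generalizing e with
  | nil => simp [sigmaSeq]; exact List.isChain_singleton e
  | cons x σ ih =>
    simp only [sigmaSeq, List.scanl_cons]
    show List.IsChain _ _
    rw [List.isChain_cons]
    constructor
    · intro y hy
      cases σ with
      | nil =>
        simp only [List.scanl_nil, List.head?_cons, Option.mem_some_iff] at hy
        have := hσ x (by simp)
        omega
      | cons z t =>
        rw [List.scanl_cons] at hy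
        simp at hy
        have := hσ x (by simp)
        omega
    · exact ih (fun y hy => hσ y (List.mem_cons_of_mem _ hy)) (e + x)

lemma sigmaSeq_ne_nil (σ : List ℤ) (e : ℤ) : sigmaSeq σ e ≠ [] := by
  cases σ <;> simp [sigmaSeq]

lemma sigmaSeq_headI (σ : List ℤ) (e : ℤ) : (sigmaSeq σ e).headI = e := by
  cases σ <;> simp [sigmaSeq]

lemma delta_sigmaSeq (σ : List ℤ) : ∀ e, delta (sigmaSeq σ e) = σ := by
  induction σ with
  | nil => intro e; simp [sigmaSeq, delta]
  | cons x σ ih =>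
    intro e
    simp only [sigmaSeq, List.scanl_cons, List.cons_append, List.nil_append]
    cases σ with
    | nil => simp [delta]
    | cons y t =>
      have h := ih (e + x)
      simp only [sigmaSeq, List.scanl_cons, List.cons_append, List.nil_append] at h ⊢
      simp only [delta] at h ⊢
      simp only [List.tail_cons] at h ⊢
      rw [List.zipWith_cons_cons, h]
      congr 1
      ring

-- shuffles lemmas
lemma shuffles_nil_left {α : Type*} (l : List α) : shuffles [] l = [l] := by
  rw [shuffles]

lemma shuffles_nil_right {α : Type*} (l : List α) : shuffles l [] = [l] := by
  cases l <;> rw [shuffles]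

lemma shuffles_cons_cons {α : Type*} (a b : α) (l₁ l₂ : List α) :
    shuffles (a :: l₁) (b :: l₂)
      = (shuffles l₁ (b :: l₂)).map (a :: ·) ++ (shuffles (a :: l₁) l₂).map (b :: ·) := by
  rw [shuffles]

lemma mem_of_mem_shuffles {α : Type*} : ∀ (A B : List α), ∀ σ ∈ shuffles A B,
    ∀ x ∈ σ, x ∈ A ∨ x ∈ B := by
  intro A B
  induction A, B using shuffles.induct with
  | case1 l₂ => intro σ hσ x hx; rw [shuffles_nil_left] at hσ; simp at hσ; subst hσ; tauto
  | case2 a l₁ => intro σ hσ x hx; rw [shuffles_nil_right] at hσ; simp at hσ; subst hσ; tauto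
  | case3 a l₁ b l₂ ih1 ih2 =>
    intro σ hσ x hx
    rw [shuffles_cons_cons] at hσ
    rcases List.mem_append.mp hσ with h | h <;> rw [List.mem_map] at h <;>
      obtain ⟨τ, hτ, rfl⟩ := h
    · rcases List.mem_cons.mp hx with rfl | hx'
      · left; simp
      · rcases ih1 τ hτ x hx' with h | h
        · left; exact List.mem_cons_of_mem _ h
        · right; exact h
    · rcases List.mem_cons.mp hx with rfl | hx'
      · right; simp
      · rcases ih2 τ hτ x hx' with h | h
        · left; exact h
        · right; exact List.mem_cons_of_mem _ h

lemma length_of_mem_shuffles {α : Type*} : ∀ (A B : List α), ∀ σ ∈ shuffles A B,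
    σ.length = A.length + B.length := by
  intro A B
  induction A, B using shuffles.induct with
  | case1 l₂ => intro σ hσ; rw [shuffles_nil_left] at hσ; simp at hσ; simp [hσ]
  | case2 a l₁ => intro σ hσ; rw [shuffles_nil_right] at hσ; simp at hσ; simp [hσ]
  | case3 a l₁ b l₂ ih1 ih2 =>
    intro σ hσ
    rw [shuffles_cons_cons] at hσ
    rcases List.mem_append.mp hσ with h | h <;> rw [List.mem_map] at h <;>
      obtain ⟨τ, hτ, rfl⟩ := h
    · have := ih1 τ hτ; simp at this ⊢; omega
    · have := ih2 τ hτ; simp at this ⊢; omega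

lemma sum_of_mem_shuffles : ∀ (A B : List ℤ), ∀ σ ∈ shuffles A B,
    σ.sum = A.sum + B.sum := by
  intro A B
  induction A, B using shuffles.induct with
  | case1 l₂ => intro σ hσ; rw [shuffles_nil_left] at hσ; simp at hσ; simp [hσ]
  | case2 a l₁ => intro σ hσ; rw [shuffles_nil_right] at hσ; simp at hσ; simp [hσ]
  | case3 a l₁ b l₂ ih1 ih2 =>
    intro σ hσ
    rw [shuffles_cons_cons] at hσ
    rcases List.mem_append.mp hσ with h | h <;> rw [List.mem_map] at h <;>
      obtain ⟨τ, hτ, rfl⟩ := h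
    · have := ih1 τ hτ; simp at this ⊢; omega
    · have := ih2 τ hτ; simp at this ⊢; omega

lemma shuffles_snoc_sum {α : Type*} {M : Type*} [AddCommMonoid M] (a b : α) :
    ∀ (n : ℕ) (A B : List α), A.length + B.length ≤ n → ∀ (f : List α → M),
    ((shuffles (A ++ [a]) (B ++ [b])).map f).sum
      = ((shuffles A (B ++ [b])).map (fun σ => f (σ ++ [a]))).sum
      + ((shuffles (A ++ [a]) B).map (fun σ => f (σ ++ [b]))).sum := by
  intro n
  induction n with
  | zero =>
    intro A B hlen f
    have hA : A = [] := by cases A <;> simp_all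
    have hB : B = [] := by cases B <;> simp_all
    subst hA; subst hB
    simp only [List.nil_append]
    rw [shuffles_cons_cons]
    simp [shuffles_nil_left, shuffles_nil_right, add_comm]
  | succ n ih =>
    intro A B hlen f
    match A, B with
    | [], [] =>
      simp only [List.nil_append]
      rw [shuffles_cons_cons]
      simp [shuffles_nil_left, shuffles_nil_right, add_comm]
    | [], y :: B' =>
      simp only [List.nil_append, List.cons_append]
      rw [shuffles_cons_cons, shuffles_nil_left]
      rw [show shuffles [a] (y :: B') = (shuffles [] (y :: B')).map (a :: ·)
            ++ (shuffles [a] B').map (y :: ·) from shuffles_cons_cons a y [] B',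
        shuffles_nil_left]
      have hIH := ih [] B' (by simp at hlen ⊢; omega) (fun σ => f (y :: σ))
      simp only [List.nil_append] at hIH
      simp only [List.map_append, List.sum_append, List.map_map, List.map_cons,
        List.map_nil, List.sum_cons, List.sum_nil, Function.comp_def] at hIH ⊢
      rw [hIH]
      simp [shuffles_nil_left, List.cons_append, List.append_assoc]
      abel
    | x :: A', [] =>
      simp only [List.nil_append, List.cons_append]
      rw [show shuffles (x :: (A' ++ [a])) [b] = (shuffles (A' ++ [a]) [b]).map (x :: ·)
            ++ (shuffles (x :: (A' ++ [a])) []).map (b :: ·) from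
          shuffles_cons_cons x b (A' ++ [a]) []]
      rw [show shuffles (x :: A') [b] = (shuffles A' [b]).map (x :: ·)
            ++ (shuffles (x :: A') []).map (b :: ·) from shuffles_cons_cons x b A' []]
      have hIH := ih A' [] (by simp at hlen ⊢; omega) (fun σ => f (x :: σ))
      rw [shuffles_nil_right] at hIH
      simp only [List.nil_append] at hIH
      simp only [shuffles_nil_right, List.map_append, List.sum_append, List.map_map,
        List.map_cons, List.map_nil, List.sum_cons, List.sum_nil, Function.comp_def] at hIH ⊢
      rw [hIH]
      simp [List.cons_append, List.append_assoc]
      abel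
    | x :: A', y :: B' =>
      simp only [List.cons_append]
      rw [shuffles_cons_cons x y (A' ++ [a]) (B' ++ [b]),
        shuffles_cons_cons x y A' (B' ++ [b]),
        shuffles_cons_cons x y (A' ++ [a]) B']
      have h1 := ih A' (y :: B') (by simp at hlen ⊢; omega) (fun σ => f (x :: σ))
      have h2 := ih (x :: A') B' (by simp at hlen ⊢; omega) (fun σ => f (y :: σ))
      simp only [List.cons_append] at h1 h2
      simp only [List.map_append, List.sum_append, List.map_map, Function.comp_def] at h1 h2 ⊢
      rw [h1, h2]
      simp only [List.cons_append]
      abel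

lemma shuffles_reverse_sum {α : Type*} {M : Type*} [AddCommMonoid M] :
    ∀ (A B : List α) (f : List α → M),
    ((shuffles A B).map (fun σ => f σ.reverse)).sum
      = ((shuffles A.reverse B.reverse).map f).sum := by
  intro A B
  induction A, B using shuffles.induct with
  | case1 l₂ => intro f; rw [shuffles_nil_left]; simp [shuffles_nil_left]
  | case2 a l₁ => intro f; rw [shuffles_nil_right]; simp [shuffles_nil_right]
  | case3 a l₁ b l₂ ih1 ih2 =>
    intro f
    rw [shuffles_cons_cons]
    have h1 := ih1 (fun σ => f (σ ++ [a]))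
    have h2 := ih2 (fun σ => f (σ ++ [b]))
    simp only [List.map_append, List.sum_append, List.map_map, Function.comp_def,
      List.reverse_cons] at h1 h2 ⊢
    rw [h1, h2]
    rw [shuffles_snoc_sum a b (l₁.reverse.length + l₂.reverse.length) l₁.reverse l₂.reverse
      le_rfl f]

-- the weights
noncomputable def Wt : List ℤ → ℚ
  | [] => 1
  | x :: τ => (((x + τ.sum : ℤ) : ℚ))⁻¹ * Wt τ

noncomputable def Vt (τ : List ℤ) : ℚ := Wt τ.reverse

lemma Wt_prod (τ : List ℤ) :
    Wt τ = ∏ k ∈ Finset.range τ.length, (((τ.drop k).sum : ℤ) : ℚ)⁻¹ := by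
  induction τ with
  | nil => simp [Wt]
  | cons x τ ih =>
    rw [show Wt (x :: τ) = (((x + τ.sum : ℤ) : ℚ))⁻¹ * Wt τ from rfl, ih]
    rw [List.length_cons, Finset.prod_range_succ']
    simp [mul_comm]

lemma Vt_prod (τ : List ℤ) :
    Vt τ = ∏ k ∈ Finset.range τ.length, (((τ.take (k + 1)).sum : ℤ) : ℚ)⁻¹ := by
  rw [Vt, Wt_prod, List.length_reverse]
  rw [← Finset.prod_range_reflect]
  apply Finset.prod_congr rfl
  intro k hk
  rw [Finset.mem_range] at hk
  have h2 : τ.length - (τ.length - 1 - k) = k + 1 := by omega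
  rw [List.drop_reverse, List.sum_reverse, h2]

lemma sum_Wt_shuffles : ∀ (A B : List ℤ), (∀ x ∈ A, 0 < x) → (∀ x ∈ B, 0 < x) →
    ((shuffles A B).map Wt).sum = Wt A * Wt B := by
  intro A B
  induction A, B using shuffles.induct with
  | case1 l₂ => intro _ _; rw [shuffles_nil_left]; simp [Wt]
  | case2 a l₁ => intro _ _; rw [shuffles_nil_right]; simp [Wt]
  | case3 a l₁ b l₂ ih1 ih2 =>
    intro hA hB
    have hl₁ : ∀ x ∈ l₁, 0 < x := fun x hx => hA x (List.mem_cons_of_mem _ hx)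
    have hl₂ : ∀ x ∈ l₂, 0 < x := fun x hx => hB x (List.mem_cons_of_mem _ hx)
    have ha : 0 < a := hA a (by simp)
    have hb : 0 < b := hB b (by simp)
    have hsl₁ : 0 ≤ l₁.sum := List.sum_nonneg (fun x hx => (hl₁ x hx).le)
    have hsl₂ : 0 ≤ l₂.sum := List.sum_nonneg (fun x hx => (hl₂ x hx).le)
    rw [shuffles_cons_cons, List.map_append, List.sum_append, List.map_map, List.map_map]
    have e1 : ∀ σ ∈ shuffles l₁ (b :: l₂), (Wt ∘ (a :: ·)) σ
        = ((a + l₁.sum + (b + l₂.sum) : ℤ) : ℚ)⁻¹ * Wt σ := by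
      intro σ hσ
      have hs := sum_of_mem_shuffles l₁ (b :: l₂) σ hσ
      simp only [Function.comp_apply]
      rw [show Wt (a :: σ) = (((a + σ.sum : ℤ) : ℚ))⁻¹ * Wt σ from rfl,
        show a + σ.sum = a + l₁.sum + (b + l₂.sum) from by rw [hs, List.sum_cons]; ring]
    have e2 : ∀ σ ∈ shuffles (a :: l₁) l₂, (Wt ∘ (b :: ·)) σ
        = ((a + l₁.sum + (b + l₂.sum) : ℤ) : ℚ)⁻¹ * Wt σ := by
      intro σ hσ
      have hs := sum_of_mem_shuffles (a :: l₁) l₂ σ hσ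
      simp only [Function.comp_apply]
      rw [show Wt (b :: σ) = (((b + σ.sum : ℤ) : ℚ))⁻¹ * Wt σ from rfl,
        show b + σ.sum = a + l₁.sum + (b + l₂.sum) from by rw [hs, List.sum_cons]; ring]
    rw [List.map_congr_left e1, List.map_congr_left e2]
    rw [List.sum_map_mul_left, List.sum_map_mul_left, ih1 hl₁ hB, ih2 hA hl₂]
    rw [show Wt (a :: l₁) = (((a + l₁.sum : ℤ) : ℚ))⁻¹ * Wt l₁ from rfl]
    rw [show Wt (b :: l₂) = (((b + l₂.sum : ℤ) : ℚ))⁻¹ * Wt l₂ from rfl]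
    set x := ((a + l₁.sum : ℤ) : ℚ) with hxdef
    set y := ((b + l₂.sum : ℤ) : ℚ) with hydef
    have hS : ((a + l₁.sum + (b + l₂.sum) : ℤ) : ℚ) = x + y := by
      rw [hxdef, hydef]; push_cast; ring
    rw [hS]
    have hx : x ≠ 0 := by
      rw [hxdef]
      have : (0:ℤ) < a + l₁.sum := by omega
      exact_mod_cast this.ne'
    have hy : y ≠ 0 := by
      rw [hydef]
      have : (0:ℤ) < b + l₂.sum := by omega
      exact_mod_cast this.ne'
    have hxy : x + y ≠ 0 := by
      rw [← hS]
      have : (0:ℤ) < a + l₁.sum + (b + l₂.sum) := by omega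
      exact_mod_cast this.ne'
    field_simp

lemma sum_Vt_shuffles (A B : List ℤ) (hA : ∀ x ∈ A, 0 < x) (hB : ∀ x ∈ B, 0 < x) :
    ((shuffles A B).map Vt).sum = Vt A * Vt B := by
  have h : (shuffles A B).map Vt = (shuffles A B).map (fun σ => Wt σ.reverse) := rfl
  rw [h, shuffles_reverse_sum A B Wt,
    sum_Wt_shuffles A.reverse B.reverse (by simpa using hA) (by simpa using hB)]
  rfl

lemma double_sum_reorg {M : Type*} [AddCommMonoid M] (n m : ℕ) (T Ta Tb : ℕ → ℕ → M) (S : M)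
    (h00 : T 0 0 = S)
    (h0l : ∀ l < m + 1, T 0 (l + 1) = Tb 0 l)
    (hk0 : ∀ k < n + 1, T (k + 1) 0 = Ta k 0)
    (hkl : ∀ k < n + 1, ∀ l < m + 1, T (k + 1) (l + 1) = Ta k (l + 1) + Tb (k + 1) l) :
    ∑ k ∈ Finset.range (n + 2), ∑ l ∈ Finset.range (m + 2), T k l
      = S + (∑ k ∈ Finset.range (n + 1), ∑ l ∈ Finset.range (m + 2), Ta k l)
          + (∑ k ∈ Finset.range (n + 2), ∑ l ∈ Finset.range (m + 1), Tb k l) := by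
  rw [Finset.sum_range_succ' (fun k => ∑ l ∈ Finset.range (m + 2), T k l)]
  rw [Finset.sum_range_succ' (fun l => T 0 l)]
  rw [Finset.sum_congr rfl (fun l hl => h0l l (Finset.mem_range.mp hl)), h00]
  have hF : ∀ k ∈ Finset.range (n + 1),
      ∑ l ∈ Finset.range (m + 2), T (k + 1) l
        = ∑ l ∈ Finset.range (m + 2), Ta k l + ∑ l ∈ Finset.range (m + 1), Tb (k + 1) l := by
    intro k hk
    rw [Finset.mem_range] at hk
    rw [Finset.sum_range_succ' (fun l => T (k + 1) l)]
    rw [Finset.sum_congr rfl (fun l hl => hkl k hk l (Finset.mem_range.mp hl)), hk0 k hk]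
    rw [Finset.sum_add_distrib]
    rw [Finset.sum_range_succ' (fun l => Ta k l)]
    abel
  rw [Finset.sum_congr rfl hF, Finset.sum_add_distrib]
  rw [Finset.sum_range_succ' (fun k => ∑ l ∈ Finset.range (m + 1), Tb k l)]
  abel

-- The master reorganization lemma
lemma master {α : Type*} {M : Type*} [AddCommMonoid M] :
    ∀ (A B : List α) (g : List α → List α → M),
    ((shuffles A B).map
        (fun σ => ∑ i ∈ Finset.range (σ.length + 1), g (σ.take i) (σ.drop i))).sum
      = ∑ k ∈ Finset.range (A.length + 1), ∑ l ∈ Finset.range (B.length + 1),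
          ((shuffles (A.take k) (B.take l)).map
            (fun τ₁ => ((shuffles (A.drop k) (B.drop l)).map (fun τ₂ => g τ₁ τ₂)).sum)).sum := by
  intro A B
  induction A, B using shuffles.induct with
  | case1 B =>
    intro g
    rw [shuffles_nil_left]
    simp only [List.length_nil, List.map_cons, List.map_nil, List.sum_cons, List.sum_nil,
      add_zero, zero_add, Finset.range_one, Finset.sum_singleton, List.take_nil, List.drop_nil]
    apply Finset.sum_congr rfl
    intro l hl
    rw [shuffles_nil_left, shuffles_nil_left]
    simp
  | case2 a A =>
    intro g
    rw [shuffles_nil_right]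
    simp only [List.length_nil, List.map_cons, List.map_nil, List.sum_cons, List.sum_nil,
      add_zero, zero_add, Finset.range_one, List.take_nil, List.drop_nil]
    rw [Finset.sum_comm]
    simp only [Finset.range_one, Finset.sum_singleton]
    apply Finset.sum_congr rfl
    intro k hk
    rw [shuffles_nil_right, shuffles_nil_right]
    simp
  | case3 a A b B ih1 ih2 =>
    intro g
    -- LHS
    rw [shuffles_cons_cons, List.map_append, List.sum_append, List.map_map, List.map_map]
    have lenAB : ∀ σ ∈ shuffles A (b :: B), σ.length = A.length + (b :: B).length :=
      length_of_mem_shuffles A (b :: B)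
    have lenAB' : ∀ σ ∈ shuffles (a :: A) B, σ.length = (a :: A).length + B.length :=
      length_of_mem_shuffles (a :: A) B
    have e1 : ∀ σ ∈ shuffles A (b :: B),
        ((fun σ => ∑ i ∈ Finset.range (σ.length + 1), g (σ.take i) (σ.drop i)) ∘ (a :: ·)) σ
        = g [] (a :: σ) + ∑ i ∈ Finset.range (σ.length + 1), g (a :: σ.take i) (σ.drop i) := by
      intro σ hσ
      simp only [Function.comp_apply, List.length_cons]
      rw [Finset.sum_range_succ']
      simp only [List.take_succ_cons, List.drop_succ_cons, List.take_zero, List.drop_zero]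
      rw [add_comm]
    have e2 : ∀ σ ∈ shuffles (a :: A) B,
        ((fun σ => ∑ i ∈ Finset.range (σ.length + 1), g (σ.take i) (σ.drop i)) ∘ (b :: ·)) σ
        = g [] (b :: σ) + ∑ i ∈ Finset.range (σ.length + 1), g (b :: σ.take i) (σ.drop i) := by
      intro σ hσ
      simp only [Function.comp_apply, List.length_cons]
      rw [Finset.sum_range_succ']
      simp only [List.take_succ_cons, List.drop_succ_cons, List.take_zero, List.drop_zero]
      rw [add_comm]
    rw [List.map_congr_left e1, List.map_congr_left e2]
    rw [List.sum_map_add, List.sum_map_add]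
    rw [ih1 (fun τ₁ τ₂ => g (a :: τ₁) τ₂), ih2 (fun τ₁ τ₂ => g (b :: τ₁) τ₂)]
    simp only [List.length_cons]
    have h00 : (List.map (fun τ₁ =>
          (List.map (fun τ₂ => g τ₁ τ₂) (shuffles (List.drop 0 (a :: A)) (List.drop 0 (b :: B)))).sum)
          (shuffles (List.take 0 (a :: A)) (List.take 0 (b :: B)))).sum
        = (List.map (fun σ => g [] (a :: σ)) (shuffles A (b :: B))).sum
          + (List.map (fun σ => g [] (b :: σ)) (shuffles (a :: A) B)).sum := by
      simp only [List.take_zero, List.drop_zero]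
      rw [shuffles_nil_left]
      simp only [List.map_cons, List.map_nil, List.sum_cons, List.sum_nil, add_zero]
      rw [shuffles_cons_cons, List.map_append, List.sum_append, List.map_map, List.map_map]
      rfl
    have h0l : ∀ l < B.length + 1, (List.map (fun τ₁ =>
          (List.map (fun τ₂ => g τ₁ τ₂)
            (shuffles (List.drop 0 (a :: A)) (List.drop (l+1) (b :: B)))).sum)
          (shuffles (List.take 0 (a :: A)) (List.take (l+1) (b :: B)))).sum
        = (List.map (fun τ₁ =>
          (List.map (fun τ₂ => g (b :: τ₁) τ₂)
            (shuffles (List.drop 0 (a :: A)) (List.drop l B))).sum)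
          (shuffles (List.take 0 (a :: A)) (List.take l B))).sum := by
      intro l _
      simp only [List.take_zero, List.drop_zero, List.take_succ_cons, List.drop_succ_cons]
      rw [shuffles_nil_left, shuffles_nil_left]
      simp
    have hk0 : ∀ k < A.length + 1, (List.map (fun τ₁ =>
          (List.map (fun τ₂ => g τ₁ τ₂)
            (shuffles (List.drop (k+1) (a :: A)) (List.drop 0 (b :: B)))).sum)
          (shuffles (List.take (k+1) (a :: A)) (List.take 0 (b :: B)))).sum
        = (List.map (fun τ₁ =>
          (List.map (fun τ₂ => g (a :: τ₁) τ₂)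
            (shuffles (List.drop k A) (List.drop 0 (b :: B)))).sum)
          (shuffles (List.take k A) (List.take 0 (b :: B)))).sum := by
      intro k _
      simp only [List.take_zero, List.drop_zero, List.take_succ_cons, List.drop_succ_cons]
      rw [shuffles_nil_right, shuffles_nil_right]
      simp
    have hkl : ∀ k < A.length + 1, ∀ l < B.length + 1, (List.map (fun τ₁ =>
          (List.map (fun τ₂ => g τ₁ τ₂)
            (shuffles (List.drop (k+1) (a :: A)) (List.drop (l+1) (b :: B)))).sum)
          (shuffles (List.take (k+1) (a :: A)) (List.take (l+1) (b :: B)))).sum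
        = (List.map (fun τ₁ =>
            (List.map (fun τ₂ => g (a :: τ₁) τ₂)
              (shuffles (List.drop k A) (List.drop (l+1) (b :: B)))).sum)
            (shuffles (List.take k A) (List.take (l+1) (b :: B)))).sum
          + (List.map (fun τ₁ =>
            (List.map (fun τ₂ => g (b :: τ₁) τ₂)
              (shuffles (List.drop (k+1) (a :: A)) (List.drop l B))).sum)
            (shuffles (List.take (k+1) (a :: A)) (List.take l B))).sum := by
      intro k _ l _
      simp only [List.take_succ_cons, List.drop_succ_cons]
      rw [shuffles_cons_cons a b (List.take k A) (List.take l B)]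
      rw [List.map_append, List.sum_append, List.map_map, List.map_map]
      rfl
    rw [double_sum_reorg A.length B.length
      (fun k l => (List.map (fun τ₁ =>
          (List.map (fun τ₂ => g τ₁ τ₂)
            (shuffles (List.drop k (a :: A)) (List.drop l (b :: B)))).sum)
          (shuffles (List.take k (a :: A)) (List.take l (b :: B)))).sum)
      (fun k l => (List.map (fun τ₁ =>
          (List.map (fun τ₂ => g (a :: τ₁) τ₂)
            (shuffles (List.drop k A) (List.drop l (b :: B)))).sum)
          (shuffles (List.take k A) (List.take l (b :: B)))).sum)
      (fun k l => (List.map (fun τ₁ =>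
          (List.map (fun τ₂ => g (b :: τ₁) τ₂)
            (shuffles (List.drop k (a :: A)) (List.drop l B))).sum)
          (shuffles (List.take k (a :: A)) (List.take l B))).sum)
      ((List.map (fun σ => g [] (a :: σ)) (shuffles A (b :: B))).sum
        + (List.map (fun σ => g [] (b :: σ)) (shuffles (a :: A) B)).sum)
      h00 h0l hk0 hkl]
    abel

lemma pureDiagram_sigmaSeq (σ : List ℤ) (hσ : ∀ x ∈ σ, 0 < x) (e : ℤ) :
    pureDiagram (sigmaSeq σ e)
      = ∑ i ∈ Finset.range (σ.length + 1),
          AddMonoidAlgebra.single (i, e + (σ.take i).sum)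
            (Wt (σ.take i) * Vt (σ.drop i)) := by
  have hlen : (sigmaSeq σ e).length = σ.length + 1 := List.length_scanl
  have hgetD : ∀ k, k ≤ σ.length → (sigmaSeq σ e).getD k 0 = e + (σ.take k).sum :=
    scanl_getD σ e
  rw [pureDiagram, hlen]
  apply Finset.sum_congr rfl
  intro i hi
  rw [Finset.mem_range] at hi
  have hi' : i ≤ σ.length := by omega
  rw [hgetD i hi']
  congr 1
  -- coefficient identity
  have hsplit : (Finset.range (σ.length + 1)).erase i
      = Finset.range i ∪ Finset.Ico (i + 1) (σ.length + 1) := by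
    ext k
    simp only [Finset.mem_erase, Finset.mem_range, Finset.mem_union, Finset.mem_Ico]
    omega
  have hdisj : Disjoint (Finset.range i) (Finset.Ico (i + 1) (σ.length + 1)) := by
    simp only [Finset.disjoint_left, Finset.mem_range, Finset.mem_Ico]
    omega
  rw [hsplit, Finset.prod_union hdisj]
  have hsum_dt : ∀ k, k ≤ i → ((σ.take i).drop k).sum = (σ.take i).sum - (σ.take k).sum := by
    intro k hk
    have h1 := List.sum_take_add_sum_drop (σ.take i) k
    rw [List.take_take, min_eq_left hk] at h1
    omega
  have hP1 : ∏ k ∈ Finset.range i,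
      |((e + (σ.take i).sum : ℤ) : ℚ) - ((sigmaSeq σ e).getD k 0 : ℚ)|⁻¹ = Wt (σ.take i) := by
    rw [Wt_prod, List.length_take, min_eq_left hi']
    apply Finset.prod_congr rfl
    intro k hk
    rw [Finset.mem_range] at hk
    rw [hgetD k (by omega)]
    have hpos : 0 < ((σ.take i).drop k).sum := by
      apply List.sum_pos
      · intro x hx
        exact hσ x (List.mem_of_mem_take (List.mem_of_mem_drop hx))
      · have : ((σ.take i).drop k).length = i - k := by
          rw [List.length_drop, List.length_take, min_eq_left hi']
        intro hnil
        rw [hnil] at this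
        simp at this
        omega
    rw [show ((e + (σ.take i).sum : ℤ) : ℚ) - ((e + (σ.take k).sum : ℤ) : ℚ)
        = ((((σ.take i).drop k).sum : ℤ) : ℚ) by
      rw [hsum_dt k (by omega)]; push_cast; ring]
    rw [abs_of_pos (by exact_mod_cast hpos)]
  have hP2 : ∏ k ∈ Finset.Ico (i + 1) (σ.length + 1),
      |((e + (σ.take i).sum : ℤ) : ℚ) - ((sigmaSeq σ e).getD k 0 : ℚ)|⁻¹ = Vt (σ.drop i) := by
    rw [Finset.prod_Ico_eq_prod_range]
    have hll : σ.length + 1 - (i + 1) = σ.length - i := by omega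
    rw [hll, Vt_prod, List.length_drop]
    apply Finset.prod_congr rfl
    intro j hj
    rw [Finset.mem_range] at hj
    rw [hgetD (i + 1 + j) (by omega)]
    have htd : (σ.drop i).take (j + 1) = (σ.take (i + 1 + j)).drop i := by
      rw [List.drop_take]
      congr 1
      omega
    have hsum : ((σ.drop i).take (j + 1)).sum = (σ.take (i + 1 + j)).sum - (σ.take i).sum := by
      rw [htd]
      have h1 := List.sum_take_add_sum_drop (σ.take (i + 1 + j)) i
      rw [List.take_take, min_eq_left (by omega : i ≤ i + 1 + j)] at h1
      omega
    have hpos : 0 < ((σ.drop i).take (j + 1)).sum := by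
      apply List.sum_pos
      · intro x hx
        exact hσ x (List.mem_of_mem_drop (List.mem_of_mem_take hx))
      · have : ((σ.drop i).take (j + 1)).length = min (j + 1) (σ.length - i) := by
          rw [List.length_take, List.length_drop]
        intro hnil
        rw [hnil] at this
        simp at this
        omega
    rw [show ((e + (σ.take i).sum : ℤ) : ℚ) - ((e + (σ.take (i + 1 + j)).sum : ℤ) : ℚ)
        = -((((σ.drop i).take (j + 1)).sum : ℤ) : ℚ) by
      rw [hsum]; push_cast; ring]
    rw [abs_neg, abs_of_pos (by exact_mod_cast hpos)]
  rw [hP1, hP2]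

lemma single_list_sum {β : Type*} (pt : ℕ × ℤ) (f : β → ℚ) (L : List β) :
    (L.map (fun x => AddMonoidAlgebra.single pt (f x))).sum
      = AddMonoidAlgebra.single pt ((L.map f).sum) := by
  induction L with
  | nil => simp [AddMonoidAlgebra.single_zero]
  | cons x L ih =>
    simp only [List.map_cons, List.sum_cons, ih]
    exact (AddMonoidAlgebra.single_add pt (f x) ((L.map f).sum)).symm

lemma pure_mul_pure (d d' : List ℤ) (hd : d.Chain' (· < ·)) (hd' : d'.Chain' (· < ·))
    (hne : d ≠ []) (hne' : d' ≠ []) :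
    pureDiagram d * pureDiagram d' =
      ((shuffles (delta d) (delta d')).map
        (fun σ => pureDiagram (sigmaSeq σ (d.headI + d'.headI)))).sum := by
  obtain ⟨a, t, rfl⟩ := List.exists_cons_of_ne_nil hne
  obtain ⟨b, t', rfl⟩ := List.exists_cons_of_ne_nil hne'
  set A := delta (a :: t) with hAdef
  set B := delta (b :: t') with hBdef
  have hApos : ∀ x ∈ A, 0 < x := delta_pos _ hd
  have hBpos : ∀ x ∈ B, 0 < x := delta_pos _ hd'
  have hda : sigmaSeq A a = a :: t := sigmaSeq_delta t a
  have hdb : sigmaSeq B b = b :: t' := sigmaSeq_delta t' b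
  have hheadI : (a :: t).headI + (b :: t').headI = a + b := by simp
  rw [hheadI, ← hda, ← hdb]
  rw [pureDiagram_sigmaSeq A hApos a, pureDiagram_sigmaSeq B hBpos b]
  -- RHS: rewrite each pure diagram
  have hRW : ∀ σ ∈ shuffles A B, pureDiagram (sigmaSeq σ (a + b))
      = ∑ i ∈ Finset.range (σ.length + 1),
          (fun τ₁ τ₂ => AddMonoidAlgebra.single (τ₁.length, a + b + τ₁.sum) (Wt τ₁ * Vt τ₂))
            (σ.take i) (σ.drop i) := by
    intro σ hσ
    have hσpos : ∀ x ∈ σ, 0 < x := by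
      intro x hx
      rcases mem_of_mem_shuffles A B σ hσ x hx with h | h
      · exact hApos x h
      · exact hBpos x h
    rw [pureDiagram_sigmaSeq σ hσpos (a + b)]
    apply Finset.sum_congr rfl
    intro i hi
    rw [Finset.mem_range] at hi
    simp only
    rw [List.length_take, min_eq_left (by omega : i ≤ σ.length)]
  rw [List.map_congr_left hRW, master A B
    (fun τ₁ τ₂ => AddMonoidAlgebra.single (τ₁.length, a + b + τ₁.sum) (Wt τ₁ * Vt τ₂))]
  -- LHS: expand the product
  rw [Finset.sum_mul_sum]
  apply Finset.sum_congr rfl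
  intro k hk
  apply Finset.sum_congr rfl
  intro l hl
  rw [Finset.mem_range] at hk hl
  have hk' : k ≤ A.length := by omega
  have hl' : l ≤ B.length := by omega
  -- simplify the inner double list sum
  have hinner : ∀ τ₁ ∈ shuffles (A.take k) (B.take l),
      ((shuffles (A.drop k) (B.drop l)).map
        (fun τ₂ => AddMonoidAlgebra.single (τ₁.length, a + b + τ₁.sum) (Wt τ₁ * Vt τ₂))).sum
      = AddMonoidAlgebra.single (k + l, a + b + ((A.take k).sum + (B.take l).sum))
          (Wt τ₁ * (Vt (A.drop k) * Vt (B.drop l))) := by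
    intro τ₁ hτ₁
    have hlen : τ₁.length = k + l := by
      rw [length_of_mem_shuffles _ _ τ₁ hτ₁, List.length_take, List.length_take,
        min_eq_left hk', min_eq_left hl']
    have hsum : τ₁.sum = (A.take k).sum + (B.take l).sum :=
      sum_of_mem_shuffles _ _ τ₁ hτ₁
    rw [single_list_sum, List.sum_map_mul_left, hlen, hsum,
      sum_Vt_shuffles (A.drop k) (B.drop l)
        (fun x hx => hApos x (List.mem_of_mem_drop hx))
        (fun x hx => hBpos x (List.mem_of_mem_drop hx))]
  rw [List.map_congr_left hinner, single_list_sum, List.sum_map_mul_right,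
    sum_Wt_shuffles (A.take k) (B.take l)
      (fun x hx => hApos x (List.mem_of_mem_take hx))
      (fun x hx => hBpos x (List.mem_of_mem_take hx))]
  rw [AddMonoidAlgebra.single_mul_single]
  rw [show ((k, a + (A.take k).sum) + (l, b + (B.take l).sum) : ℕ × ℤ)
      = (k + l, a + b + ((A.take k).sum + (B.take l).sum)) from by
    rw [Prod.mk_add_mk]; congr 1; ring]
  congr 1
  ring

lemma sum_map_flatMap {α β M : Type*} [AddCommMonoid M] (l : List α) (g : α → List β)
    (F : β → M) :
    ((l.flatMap g).map F).sum = (l.map (fun s => ((g s).map F).sum)).sum := by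
  induction l with
  | nil => simp
  | cons x l ih => simp [List.flatMap_cons, ih]

lemma mem_of_mem_shufflesN {α : Type*} : ∀ (ls : List (List α)), ∀ σ ∈ shufflesN ls,
    ∀ x ∈ σ, ∃ l ∈ ls, x ∈ l := by
  intro ls
  induction ls with
  | nil => intro σ hσ x hx; simp [shufflesN] at hσ; subst hσ; simp at hx
  | cons l ls ih =>
    intro σ hσ x hx
    rw [shufflesN, List.mem_flatMap] at hσ
    obtain ⟨s, hs, hσs⟩ := hσ
    rcases mem_of_mem_shuffles l s σ hσs x hx with h | h
    · exact ⟨l, by simp, h⟩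
    · obtain ⟨l', hl', hx'⟩ := ih s hs x h
      exact ⟨l', by simp [hl'], hx'⟩


/-- **Theorem.** For degree sequences `d¹, …, dʳ` with first differences
`Aᵢ = Δ(dⁱ)`, the `r`-fold tensor product of the pure diagrams satisfies
`∏_{i=1}^r ⟨dⁱ⟩ = ∑_{σ ∈ Sh(A₁,…,A_r)} ⟨Σ(σ, d¹₀ + ··· + dʳ₀)⟩`. -/
theorem prod_pure_eq_sum_shufflesN (L : List (List ℤ))
    (hL : ∀ d ∈ L, d.Chain' (· < ·) ∧ d ≠ []) :
    (L.map pureDiagram).prod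
      = ((shufflesN (L.map delta)).map
          (fun σ => pureDiagram (sigmaSeq σ ((L.map List.headI).sum)))).sum := by
  induction L with
  | nil =>
    simp only [List.map_nil, List.prod_nil, List.sum_nil]
    rw [shufflesN]
    simp only [List.map_cons, List.map_nil, List.sum_cons, List.sum_nil, add_zero]
    rw [show sigmaSeq [] 0 = [0] from rfl]
    rw [pureDiagram]
    simp [AddMonoidAlgebra.one_def]
    rfl
  | cons d L ih =>
    have hd := (hL d (by simp)).1
    have hne := (hL d (by simp)).2
    have hL' : ∀ d' ∈ L, d'.Chain' (· < ·) ∧ d' ≠ [] :=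
      fun d' hd' => hL d' (List.mem_cons_of_mem _ hd')
    rw [List.map_cons, List.prod_cons, ih hL']
    rw [← List.sum_map_mul_left]
    have hcongr : ∀ s ∈ shufflesN (L.map delta),
        pureDiagram d * pureDiagram (sigmaSeq s ((L.map List.headI).sum))
        = ((shuffles (delta d) s).map
            (fun σ => pureDiagram (sigmaSeq σ (d.headI + (L.map List.headI).sum)))).sum := by
      intro s hs
      have hspos : ∀ x ∈ s, 0 < x := by
        intro x hx
        obtain ⟨l, hl, hxl⟩ := mem_of_mem_shufflesN (L.map delta) s hs x hx
        rw [List.mem_map] at hl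
        obtain ⟨d₀, hd₀, rfl⟩ := hl
        exact delta_pos d₀ (hL' d₀ hd₀).1 x hxl
      rw [pure_mul_pure d (sigmaSeq s ((L.map List.headI).sum)) hd
        (chain'_sigmaSeq s hspos _) hne (sigmaSeq_ne_nil s _)]
      rw [delta_sigmaSeq, sigmaSeq_headI]
    rw [List.map_congr_left hcongr]
    simp only [List.map_cons, List.sum_cons]
    rw [show shufflesN (delta d :: L.map delta)
      = (shufflesN (L.map delta)).flatMap (fun s => shuffles (delta d) s) from rfl]
    rw [sum_map_flatMap]
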